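/- In the Diestel–Leader graph DL(2,2), for each k ≥ 1 there is a finite minimal edge cutset C_k separating a fixed vertex from infinity which is not (k−1)-close: C_k is the disjoint union of two nonempty edge sets A_k and B_k with dist(A_k, B_k) ≥ k. Consequently C_{DL(2,2)} = ∞. -/

import Mathlib

/-!
Let `L` be the level of `o = (o₁, o₂)`, let `a` be the `k`-th ancestor of `o₁` in `T` (level
`L - k`) and `a'` the `k`-th ancestor of `o₂` in `T'` (level `L + k`). The vertices whose
coordinates descend from `a` and from `a'` form a finite box around `o` on the levels
`[L - k, L + k]`, and its edge boundary `C` separates `o` from infinity. An edge can leave the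
box only through the bottom face (first coordinate `a`) or through the top face (second
coordinate `a'`), so `C` splits into a part on levels `≤ L - k` and a part on levels
`≥ L + k`; as levels change by one along edges, the parts are at distance `≥ 2k`.
`C` is minimal because through each of its edges there is a ray from `o` crossing `C` only
there: one coordinate follows a geodesic of its tree from `o` through the edge, while the
other walks down to descendants and then up along ancestors so that the levels stay equal.
-/

/-- `f` is an infinite (injective) ray. -/
def IsRay {W : Type*} (G : SimpleGraph W) (f : ℕ → W) : Prop :=
  Function.Injective f ∧ ∀ n, G.Adj (f n) (f (n + 1))

/-- The edge set `P` separates the vertex `o` from infinity. -/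
def SepInf {W : Type*} (G : SimpleGraph W) (o : W) (P : Set (Sym2 W)) : Prop :=
  ∀ f : ℕ → W, IsRay G f → f 0 = o → ∃ n, s(f n, f (n + 1)) ∈ P

/-- The Diestel–Leader graph (horocyclic product) of two trees `T`, `T'` with level
functions `ℓ`, `ℓ'`: vertices are pairs at equal levels, adjacent iff both
coordinates are adjacent. -/
def DLGraph {V V' : Type*} (T : SimpleGraph V) (T' : SimpleGraph V')
    (ℓ : V → ℤ) (ℓ' : V' → ℤ) : SimpleGraph {p : V × V' // ℓ p.1 = ℓ' p.2} :=
  SimpleGraph.fromRel fun p q => T.Adj p.1.1 q.1.1 ∧ T'.Adj p.1.2 q.1.2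

theorem injective_of_eq_add_dist {α : Type*} {φ : α → ℤ} {g : ℕ → α} {c : ℤ} {i : ℕ}
    (hφ : ∀ n, φ (g n) = c + Nat.dist n i)
    (hne : ∀ m n, m < i → m + n = 2 * i → g m ≠ g n) : Function.Injective g := by
  intro m n hmn
  have hlev := congrArg φ hmn
  rw [hφ, hφ] at hlev
  unfold Nat.dist at hlev
  by_contra hmn'
  rcases Nat.lt_or_ge m i with hm | hm
  · exact hne m n hm (by omega) hmn
  · exact hne n m (by omega) (by omega) hmn.symm

structure IsHorocyclic {V : Type*} (G : SimpleGraph V) (h : V → ℤ) : Prop where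
  adj_level : ∀ u v, G.Adj u v → h v = h u + 1 ∨ h v = h u - 1
  existsUnique_parent : ∀ v, ∃! w, G.Adj v w ∧ h w = h v - 1
  finite_children : ∀ v, {w | G.Adj v w ∧ h w = h v + 1}.Finite
  nonempty_children : ∀ v, {w | G.Adj v w ∧ h w = h v + 1}.Nonempty

namespace IsHorocyclic

variable {V : Type*} {G : SimpleGraph V} {h : V → ℤ}

theorem of_ncard {d : ℕ} (hd : d ≠ 0)
    (hlev : ∀ u v, G.Adj u v → h v = h u + 1 ∨ h v = h u - 1)
    (hup : ∀ v, {w | G.Adj v w ∧ h w = h v - 1}.ncard = 1)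
    (hdown : ∀ v, {w | G.Adj v w ∧ h w = h v + 1}.ncard = d) : IsHorocyclic G h where
  adj_level := hlev
  existsUnique_parent v := by
    obtain ⟨w, hw⟩ := Set.ncard_eq_one.mp (hup v)
    exact ⟨w, (Set.ext_iff.mp hw w).mpr rfl, fun u hu => (Set.ext_iff.mp hw u).mp hu⟩
  finite_children v := Set.finite_of_ncard_ne_zero (by rw [hdown v]; exact hd)
  nonempty_children v := Set.nonempty_of_ncard_ne_zero (by rw [hdown v]; exact hd)

variable (hG : IsHorocyclic G h)
include hG

noncomputable def parent (v : V) : V := (hG.existsUnique_parent v).exists.choose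

noncomputable def child (v : V) : V := (hG.nonempty_children v).some

theorem adj_parent (v : V) : G.Adj v (hG.parent v) :=
  (hG.existsUnique_parent v).exists.choose_spec.1

theorem level_parent (v : V) : h (hG.parent v) = h v - 1 :=
  (hG.existsUnique_parent v).exists.choose_spec.2

theorem adj_child (v : V) : G.Adj v (hG.child v) := (hG.nonempty_children v).some_mem.1

theorem level_child (v : V) : h (hG.child v) = h v + 1 := (hG.nonempty_children v).some_mem.2

theorem eq_parent {v w : V} (hvw : G.Adj v w) (hw : h w = h v - 1) : w = hG.parent v :=
  (hG.existsUnique_parent v).unique ⟨hvw, hw⟩ ⟨hG.adj_parent v, hG.level_parent v⟩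

theorem parent_eq_of_adj {v w : V} (hvw : G.Adj v w) (hw : h w = h v + 1) : hG.parent w = v :=
  (hG.eq_parent hvw.symm (by omega)).symm

theorem parent_child (v : V) : hG.parent (hG.child v) = v :=
  hG.parent_eq_of_adj (hG.adj_child v) (hG.level_child v)

theorem level_parent_iterate (n : ℕ) (v : V) : h (hG.parent^[n] v) = h v - n := by
  induction n with
  | zero => simp
  | succ n ih => rw [Function.iterate_succ_apply', hG.level_parent, ih]; push_cast; ring

theorem level_child_iterate (n : ℕ) (v : V) : h (hG.child^[n] v) = h v + n := by
  induction n with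
  | zero => simp
  | succ n ih => rw [Function.iterate_succ_apply', hG.level_child, ih]; push_cast; ring

theorem parent_iterate_child_iterate (n : ℕ) (v : V) :
    hG.parent^[n] (hG.child^[n] v) = v := by
  induction n with
  | zero => rfl
  | succ n ih =>
    rw [Function.iterate_succ_apply' hG.child, Function.iterate_succ_apply, hG.parent_child, ih]

theorem finite_preimage_parent {S : Set V} (hS : S.Finite) : (hG.parent ⁻¹' S).Finite := by
  refine (hS.biUnion fun z _ => hG.finite_children z).subset fun x hx => ?_
  exact Set.mem_biUnion hx ⟨(hG.adj_parent x).symm, by rw [hG.level_parent]; ring⟩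

def descendants (a : V) : Set V := {x | ∃ m, hG.parent^[m] x = a}

theorem mem_descendants_self (a : V) : a ∈ hG.descendants a := ⟨0, rfl⟩

theorem mem_descendants_of_parent_mem {a x : V} (hx : hG.parent x ∈ hG.descendants a) :
    x ∈ hG.descendants a :=
  let ⟨m, hm⟩ := hx
  ⟨m + 1, hm⟩

theorem eq_or_parent_mem_descendants {a x : V} (hx : x ∈ hG.descendants a) :
    x = a ∨ hG.parent x ∈ hG.descendants a := by
  obtain ⟨_ | m, hm⟩ := hx
  · exact Or.inl hm
  · exact Or.inr ⟨m, hm⟩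

theorem parent_iterate_eq_of_mem_descendants {a x : V} {m : ℕ} (hx : x ∈ hG.descendants a)
    (hm : h x = h a + m) : hG.parent^[m] x = a := by
  obtain ⟨m', hm'⟩ := hx
  have := hG.level_parent_iterate m' x
  rw [hm'] at this
  rwa [show m = m' by omega]

theorem level_le_of_mem_descendants {a x : V} (hx : x ∈ hG.descendants a) : h a ≤ h x := by
  obtain ⟨m, rfl⟩ := hx
  rw [hG.level_parent_iterate]; omega

theorem finite_descendants_level_le (a : V) (c : ℤ) :
    {x ∈ hG.descendants a | h x ≤ c}.Finite := by
  have hfin (m : ℕ) : (hG.parent^[m] ⁻¹' {a}).Finite := by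
    induction m with
    | zero => exact Set.finite_singleton a
    | succ m ih => rw [Function.iterate_succ, Set.preimage_comp]; exact hG.finite_preimage_parent ih
  refine ((Set.finite_Iic (c - h a).toNat).biUnion fun m _ => hfin m).subset ?_
  rintro x ⟨⟨m, hm⟩, hxc⟩
  have := hG.level_parent_iterate m x
  rw [hm] at this
  exact Set.mem_biUnion (show m ≤ (c - h a).toNat by omega) hm

theorem exists_walk_down_then_up (v : V) (i : ℕ) :
    ∃ u : ℕ → V, (∀ n, G.Adj (u n) (u (n + 1))) ∧ u 0 = v ∧
      (∀ m, u (2 * i + m) = hG.parent^[m] v) ∧ ∀ n, h (u n) = h v + i - Nat.dist n i := by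
  refine ⟨fun n => hG.parent^[Nat.dist n i] (hG.child^[i] v), fun n => ?_, ?_, fun m => ?_,
    fun n => ?_⟩
  · dsimp only
    unfold Nat.dist
    rcases Nat.lt_or_ge n i with hn | hn
    · rw [show n - i + (i - n) = (n + 1 - i + (i - (n + 1))) + 1 by omega,
        Function.iterate_succ_apply']
      exact (hG.adj_parent _).symm
    · rw [show n + 1 - i + (i - (n + 1)) = (n - i + (i - n)) + 1 by omega,
        Function.iterate_succ_apply']
      exact hG.adj_parent _
  · simp only [Nat.dist, zero_tsub, tsub_zero, zero_add]
    exact hG.parent_iterate_child_iterate i v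
  · dsimp only
    rw [show Nat.dist (2 * i + m) i = m + i by unfold Nat.dist; omega,
      Function.iterate_add_apply, hG.parent_iterate_child_iterate]
  · simp only [hG.level_parent_iterate, hG.level_child_iterate]

noncomputable def lineThrough (z : V) (K m : ℕ) : V :=
  if m ≤ K then hG.parent^[K - m] z else hG.child^[m - K] z

theorem lineThrough_of_le {z : V} {K m : ℕ} (hm : m ≤ K) :
    hG.lineThrough z K m = hG.parent^[K - m] z :=
  if_pos hm

theorem lineThrough_of_lt {z : V} {K m : ℕ} (hm : m < K) :
    hG.lineThrough z K m = hG.parent^[K - (m + 1)] (hG.parent z) := by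
  rw [hG.lineThrough_of_le hm.le, show K - m = K - (m + 1) + 1 by omega,
    Function.iterate_succ_apply]

theorem level_lineThrough (z : V) (K m : ℕ) : h (hG.lineThrough z K m) = h z - K + m := by
  unfold lineThrough
  split_ifs
  · rw [hG.level_parent_iterate]; omega
  · rw [hG.level_child_iterate]; omega

theorem adj_lineThrough (z : V) (K m : ℕ) :
    G.Adj (hG.lineThrough z K m) (hG.lineThrough z K (m + 1)) := by
  rcases Nat.lt_or_ge m K with hm | hm
  · rw [hG.lineThrough_of_le hm.le, hG.lineThrough_of_le hm,
      show K - m = (K - (m + 1)) + 1 by omega, Function.iterate_succ_apply']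
    exact (hG.adj_parent _).symm
  · have hchild (n : ℕ) (hn : K ≤ n) : hG.lineThrough z K n = hG.child^[n - K] z := by
      unfold lineThrough
      split_ifs with h'
      · rw [show K - n = 0 by omega, show n - K = 0 by omega]; rfl
      · rfl
    rw [hchild m hm, hchild (m + 1) (by omega), show m + 1 - K = (m - K) + 1 by omega,
      Function.iterate_succ_apply']
    exact hG.adj_child _

/-- The ray climbs from `x` for `i` steps to the first common ancestor of `x` and `y`, then
descends through `y` and `z`. -/
theorem exists_geodesic_ray {x y z : V} {j d : ℕ}
    (hxy : hG.parent^[j] x = hG.parent^[j + d] y) (hyz : G.Adj y z) (hz : h z = h y + 1) :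
    ∃ (g : ℕ → V) (i : ℕ), i ≤ j ∧ Function.Injective g ∧ (∀ n, G.Adj (g n) (g (n + 1))) ∧
      g 0 = x ∧ g (2 * i + d) = y ∧ g (2 * i + d + 1) = z ∧
      ∀ n, h (g n) = h x - i + Nat.dist n i := by
  classical
  have hex : ∃ i, hG.parent^[i] x = hG.parent^[i + d] y := ⟨j, hxy⟩
  set i := Nat.find hex
  have hpz : hG.parent z = y := hG.parent_eq_of_adj hyz hz
  have hyx : h y = h x + d := by
    have h1 := hG.level_parent_iterate j x
    have h2 := hG.level_parent_iterate (j + d) y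
    rw [hxy] at h1
    push_cast at h2
    omega
  set K := 2 * i + d + 1 with hK
  set g : ℕ → V := fun n => if n ≤ i then hG.parent^[n] x else hG.lineThrough z K n
  have hg_line (n : ℕ) (hn : i ≤ n) : g n = hG.lineThrough z K n := by
    by_cases hni : n ≤ i
    · simp only [g, if_pos hni]
      rw [hG.lineThrough_of_lt (by omega), hpz, show K - (n + 1) = n + d by omega,
        show n = i by omega]
      exact Nat.find_spec hex
    · simp only [g, if_neg hni]
  have hg_level (n : ℕ) : h (g n) = h x - i + Nat.dist n i := by
    unfold Nat.dist
    rcases Nat.lt_or_ge i n with hn | hn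
    · rw [hg_line n hn.le, hG.level_lineThrough]; omega
    · simp only [g, if_pos hn, hG.level_parent_iterate]; omega
  have hg_ne (m n : ℕ) (hm : m < i) (hmn : m + n = 2 * i) : g m ≠ g n := by
    intro hgmn
    rw [hg_line n (by omega), hG.lineThrough_of_lt (by omega), hpz,
      show K - (n + 1) = m + d by omega] at hgmn
    simp only [g, if_pos hm.le] at hgmn
    exact Nat.find_min hex hm hgmn
  refine ⟨g, i, Nat.find_min' hex hxy, injective_of_eq_add_dist hg_level hg_ne, fun n => ?_,
    ?_, ?_, ?_, hg_level⟩
  · rcases Nat.lt_or_ge n i with hn | hn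
    · simp only [g, if_pos hn.le, if_pos (show n + 1 ≤ i from hn), Function.iterate_succ_apply']
      exact hG.adj_parent _
    · rw [hg_line n hn, hg_line (n + 1) (by omega)]
      exact hG.adj_lineThrough z K n
  · simp only [g, if_pos (Nat.zero_le i)]; rfl
  · rw [hg_line _ (by omega), hG.lineThrough_of_lt (by omega), hpz,
      show K - (2 * i + d + 1) = 0 by omega]
    rfl
  · rw [hg_line _ (by omega), hG.lineThrough_of_le le_rfl, Nat.sub_self]
    rfl

end IsHorocyclic

namespace SimpleGraph

variable {W : Type*} {G : SimpleGraph W}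

variable (G) in
def edgeBoundary (F : Set W) : Set (Sym2 W) :=
  {e | ∃ p ∈ F, ∃ q ∉ F, G.Adj p q ∧ e = s(p, q)}

variable (G) in
def ExistsRayCrossingOnlyAt (o : W) (C : Set (Sym2 W)) (e : Sym2 W) : Prop :=
  ∃ (f : ℕ → W) (N : ℕ), IsRay G f ∧ f 0 = o ∧ s(f N, f (N + 1)) = e ∧
    ∀ n, s(f n, f (n + 1)) ∈ C → n = N

theorem edgeBoundary_subset_edgeSet (F : Set W) : G.edgeBoundary F ⊆ G.edgeSet := by
  rintro _ ⟨p, -, q, -, hpq, rfl⟩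
  exact hpq

theorem finite_edgeBoundary {F : Set W} (hF : F.Finite)
    (hG : ∀ p ∈ F, (G.neighborSet p).Finite) : (G.edgeBoundary F).Finite := by
  refine (hF.biUnion fun p hp => (hG p hp).image fun q => s(p, q)).subset ?_
  rintro _ ⟨p, hp, q, -, hpq, rfl⟩
  exact Set.mem_biUnion hp ⟨q, hpq, rfl⟩

theorem sepInf_edgeBoundary {F : Set W} {o : W} (hF : F.Finite) (ho : o ∈ F) :
    SepInf G o (G.edgeBoundary F) := by
  classical
  rintro f ⟨hinj, hadj⟩ rfl
  have hex : ∃ n, f n ∉ F := by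
    by_contra! h
    exact Set.infinite_range_of_injective hinj (hF.subset (Set.range_subset_iff.mpr h))
  obtain ⟨n, hn⟩ : ∃ n, Nat.find hex = n + 1 :=
    Nat.exists_eq_add_one_of_ne_zero fun h0 => (h0 ▸ Nat.find_spec hex) ho
  refine ⟨n, f n, ?_, f (n + 1), hn ▸ Nat.find_spec hex, hadj n, rfl⟩
  exact not_not.mp (Nat.find_min hex (by omega))

theorem not_sepInf_of_ssubset {o : W} {C Q : Set (Sym2 W)}
    (hC : ∀ e ∈ C, G.ExistsRayCrossingOnlyAt o C e) (hQ : Q ⊂ C) : ¬ SepInf G o Q := by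
  intro hsep
  obtain ⟨e, heC, heQ⟩ := Set.exists_of_ssubset hQ
  obtain ⟨f, N, hf, hf0, rfl, honly⟩ := hC e heC
  obtain ⟨n, hn⟩ := hsep f hf hf0
  exact heQ (honly n (hQ.subset hn) ▸ hn)

theorem ExistsRayCrossingOnlyAt.reachable {o x : W} {C : Set (Sym2 W)} {e : Sym2 W}
    (he : G.ExistsRayCrossingOnlyAt o C e) (hx : x ∈ e) : G.Reachable o x := by
  obtain ⟨f, N, ⟨-, hadj⟩, rfl, rfl, -⟩ := he
  have hreach (n : ℕ) : G.Reachable (f 0) (f n) := by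
    induction n with
    | zero => rfl
    | succ n ih => exact ih.trans (hadj n).reachable
  rcases Sym2.mem_iff.mp hx with rfl | rfl
  exacts [hreach N, hreach (N + 1)]

theorem eq_of_mem_of_straddles {S : W → Prop} {C : Set (Sym2 W)}
    (hC : ∀ e ∈ C, ∃ p q, e = s(p, q) ∧ S p ∧ ¬ S q) {f : ℕ → W} {N : ℕ}
    (hf : ∀ m, S (f m) ↔ m ≤ N) {n : ℕ} (hn : s(f n, f (n + 1)) ∈ C) : n = N := by
  obtain ⟨p, q, he, hp, hq⟩ := hC _ hn
  rcases Sym2.eq_iff.mp he with ⟨rfl, rfl⟩ | ⟨rfl, rfl⟩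
  · rw [hf] at hp hq; omega
  · rw [hf] at hp hq; omega

theorem abs_sub_le_dist {φ : W → ℤ} (hφ : ∀ u v, G.Adj u v → |φ u - φ v| ≤ 1) {u v : W}
    (huv : G.Reachable u v) : |φ u - φ v| ≤ G.dist u v := by
  obtain ⟨w, hw⟩ := huv.exists_walk_length_eq_dist
  rw [← hw]
  clear hw huv
  induction w with
  | nil => simp
  | @cons u v w' h w ih =>
    calc |φ u - φ w'| ≤ |φ u - φ v| + |φ v - φ w'| := abs_sub_le _ _ _
      _ ≤ 1 + w.length := add_le_add (hφ u v h) ih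
      _ = (w.cons h).length := by rw [Walk.length_cons]; push_cast; ring

end SimpleGraph

namespace DLGraph

open SimpleGraph

variable {V V' : Type*} {T : SimpleGraph V} {T' : SimpleGraph V'} {ℓ : V → ℤ} {ℓ' : V' → ℤ}

abbrev Vertex (ℓ : V → ℤ) (ℓ' : V' → ℤ) : Type _ := {p : V × V' // ℓ p.1 = ℓ' p.2}

local notation "𝕍" => Vertex ℓ ℓ'
local notation "𝔻" => DLGraph T T' ℓ ℓ'

theorem adj_iff {p q : 𝕍} : (𝔻).Adj p q ↔ T.Adj p.1.1 q.1.1 ∧ T'.Adj p.1.2 q.1.2 := by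
  refine ⟨fun ⟨_, h⟩ => h.elim id fun h => ⟨h.1.symm, h.2.symm⟩, fun h => ⟨?_, Or.inl h⟩⟩
  rintro rfl
  exact h.1.ne rfl

theorem isRay_mk {u : ℕ → V} {u' : ℕ → V'} (hℓ : ∀ n, ℓ (u n) = ℓ' (u' n))
    (hu : ∀ n, T.Adj (u n) (u (n + 1))) (hu' : ∀ n, T'.Adj (u' n) (u' (n + 1)))
    (hinj : Function.Injective u ∨ Function.Injective u') :
    IsRay 𝔻 fun n => (⟨(u n, u' n), hℓ n⟩ : 𝕍) := by
  refine ⟨fun m n hmn => ?_, fun n => adj_iff.mpr ⟨hu n, hu' n⟩⟩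
  have h := congrArg Subtype.val hmn
  simp only [Prod.mk.injEq] at h
  exact hinj.elim (· h.1) (· h.2)

variable (hT : IsHorocyclic T ℓ) (hT' : IsHorocyclic T' (-ℓ'))
include hT

theorem abs_level_sub_le_one {p q : 𝕍} (hpq : (𝔻).Adj p q) : |ℓ p.1.1 - ℓ q.1.1| ≤ 1 := by
  rcases hT.adj_level _ _ (adj_iff.mp hpq).1 with h | h <;> rw [h, abs_le] <;> omega

include hT'

theorem adj_cases {p q : 𝕍} (hpq : (𝔻).Adj p q) :
    (q.1.1 = hT.parent p.1.1 ∧ p.1.2 = hT'.parent q.1.2) ∨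
      (p.1.1 = hT.parent q.1.1 ∧ q.1.2 = hT'.parent p.1.2) := by
  obtain ⟨h, h'⟩ := adj_iff.mp hpq
  have hp := p.2
  have hq := q.2
  rcases hT.adj_level _ _ h with hl | hl
  · refine Or.inr ⟨(hT.parent_eq_of_adj h hl).symm, hT'.eq_parent h' ?_⟩
    simp only [Pi.neg_apply]; omega
  · refine Or.inl ⟨hT.eq_parent h hl, (hT'.parent_eq_of_adj h' ?_).symm⟩
    simp only [Pi.neg_apply]; omega

theorem finite_neighborSet (p : 𝕍) : ((𝔻).neighborSet p).Finite := by
  have h1 : ({hT.parent p.1.1} ∪ hT.parent ⁻¹' {p.1.1}).Finite :=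
    (Set.finite_singleton _).union (hT.finite_preimage_parent (Set.finite_singleton _))
  have h2 : ({hT'.parent p.1.2} ∪ hT'.parent ⁻¹' {p.1.2}).Finite :=
    (Set.finite_singleton _).union (hT'.finite_preimage_parent (Set.finite_singleton _))
  refine ((h1.prod h2).preimage Subtype.val_injective.injOn).subset fun q hq => ?_
  rcases adj_cases hT hT' hq with ⟨h, h'⟩ | ⟨h, h'⟩
  · exact ⟨Or.inl h, Or.inr h'.symm⟩
  · exact ⟨Or.inr h.symm, Or.inl h'⟩

def box (a : V) (a' : V') : Set 𝕍 :=
  {p | p.1.1 ∈ hT.descendants a ∧ p.1.2 ∈ hT'.descendants a'}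

variable {hT hT'}

theorem level_mem_Icc_of_mem_box {a : V} {a' : V'} {p : 𝕍} (hp : p ∈ box hT hT' a a') :
    ℓ p.1.1 ∈ Set.Icc (ℓ a) (ℓ' a') := by
  have h1 := hT.level_le_of_mem_descendants hp.1
  have h2 := hT'.level_le_of_mem_descendants hp.2
  simp only [Pi.neg_apply] at h2
  exact ⟨h1, p.2 ▸ by omega⟩

theorem finite_box (a : V) (a' : V') : (box hT hT' a a').Finite := by
  refine ((hT.finite_descendants_level_le a (ℓ' a')).prod
    (hT'.finite_descendants_level_le a' (-ℓ a))).preimage Subtype.val_injective.injOn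
    |>.subset fun p hp => ?_
  obtain ⟨h1, h2⟩ := level_mem_Icc_of_mem_box hp
  have hp2 := p.2
  exact ⟨⟨hp.1, h2⟩, ⟨hp.2, by simp only [Pi.neg_apply]; omega⟩⟩

theorem exit_box {a : V} {a' : V'} {p q : 𝕍} (hp : p ∈ box hT hT' a a')
    (hq : q ∉ box hT hT' a a') (hpq : (𝔻).Adj p q) :
    (p.1.1 = a ∧ q.1.1 = hT.parent a) ∨ (p.1.2 = a' ∧ q.1.2 = hT'.parent a') := by
  rcases adj_cases hT hT' hpq with ⟨h, h'⟩ | ⟨h, h'⟩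
  · have hq2 := hT'.mem_descendants_of_parent_mem (h' ▸ hp.2)
    rcases hT.eq_or_parent_mem_descendants hp.1 with ha | ha
    · exact Or.inl ⟨ha, ha ▸ h⟩
    · exact (hq ⟨h ▸ ha, hq2⟩).elim
  · have hq1 := hT.mem_descendants_of_parent_mem (h ▸ hp.1)
    rcases hT'.eq_or_parent_mem_descendants hp.2 with ha | ha
    · exact Or.inr ⟨ha, ha ▸ h'⟩
    · exact (hq ⟨hq1, h' ▸ ha⟩).elim

theorem level_of_mem_edgeBoundary_box {a : V} {a' : V'} {e : Sym2 𝕍}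
    (he : e ∈ (𝔻).edgeBoundary (box hT hT' a a')) :
    ∃ p q : 𝕍, e = s(p, q) ∧ ((ℓ p.1.1 = ℓ a ∧ ℓ q.1.1 = ℓ a - 1) ∨
      (ℓ p.1.1 = ℓ' a' ∧ ℓ q.1.1 = ℓ' a' + 1)) := by
  obtain ⟨p, hp, q, hq, hpq, rfl⟩ := he
  refine ⟨p, q, rfl, ?_⟩
  have hp2 := p.2
  have hq2 := q.2
  rcases exit_box hp hq hpq with ⟨h, h'⟩ | ⟨h, h'⟩
  · exact Or.inl ⟨h ▸ rfl, by rw [h', hT.level_parent]⟩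
  · have := hT'.level_parent a'
    simp only [Pi.neg_apply] at this
    exact Or.inr ⟨by rw [hp2, h], by rw [hq2, h']; omega⟩

theorem exists_ray_through_bottom (o : 𝕍) (k : ℕ) {p q : 𝕍} (hpq : (𝔻).Adj p q)
    (hp : p ∈ box hT hT' (hT.parent^[k] o.1.1) (hT'.parent^[k] o.1.2))
    (hp1 : p.1.1 = hT.parent^[k] o.1.1) (hq1 : q.1.1 = hT.parent p.1.1) :
    ∃ (f : ℕ → 𝕍) (N : ℕ), IsRay 𝔻 f ∧ f 0 = o ∧ f N = p ∧ f (N + 1) = q ∧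
      ∀ n, (ℓ (f n).1.1 ∈ Set.Icc (ℓ o.1.1 - k) (ℓ o.1.1 + k) ↔ n ≤ N) := by
  have hlp : ℓ p.1.1 = ℓ o.1.1 - k := by rw [hp1, hT.level_parent_iterate]
  have hlq : ℓ q.1.1 = ℓ p.1.1 - 1 := by rw [hq1, hT.level_parent]
  have ho := o.2
  have hp2 := p.2
  have hq2 := q.2
  have hxy : hT'.parent^[k] o.1.2 = hT'.parent^[k + k] p.1.2 := by
    refine (hT'.parent_iterate_eq_of_mem_descendants hp.2 ?_).symm
    simp only [Pi.neg_apply, hT'.level_parent_iterate]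
    push_cast
    omega
  obtain ⟨g, i, hik, hg_inj, hg_adj, hg0, hgN, hgN1, hg_lev⟩ :=
    hT'.exists_geodesic_ray hxy (adj_iff.mp hpq).2 (by simp only [Pi.neg_apply]; omega)
  obtain ⟨u, hu_adj, hu0, hu_far, hu_lev⟩ := hT.exists_walk_down_then_up o.1.1 i
  have hlev (n : ℕ) : ℓ (u n) = ℓ' (g n) := by
    have := hg_lev n
    simp only [Pi.neg_apply] at this
    rw [hu_lev]
    omega
  refine ⟨fun n => ⟨(u n, g n), hlev n⟩, 2 * i + k,
    isRay_mk hlev hu_adj hg_adj (Or.inr hg_inj), Subtype.ext (Prod.ext hu0 hg0),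
    Subtype.ext (Prod.ext ((hu_far k).trans hp1.symm) hgN),
    Subtype.ext (Prod.ext ?_ hgN1), fun n => ?_⟩
  · change u (2 * i + (k + 1)) = q.1.1
    rw [hu_far, Function.iterate_succ_apply', hq1, hp1]
  · simp only [Set.mem_Icc, hu_lev, Nat.dist]
    omega

theorem exists_ray_through_top (o : 𝕍) (k : ℕ) {p q : 𝕍} (hpq : (𝔻).Adj p q)
    (hp : p ∈ box hT hT' (hT.parent^[k] o.1.1) (hT'.parent^[k] o.1.2))
    (hp2 : p.1.2 = hT'.parent^[k] o.1.2) (hq2 : q.1.2 = hT'.parent p.1.2) :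
    ∃ (f : ℕ → 𝕍) (N : ℕ), IsRay 𝔻 f ∧ f 0 = o ∧ f N = p ∧ f (N + 1) = q ∧
      ∀ n, (ℓ (f n).1.1 ∈ Set.Icc (ℓ o.1.1 - k) (ℓ o.1.1 + k) ↔ n ≤ N) := by
  have hlp := hT'.level_parent_iterate k o.1.2
  have hlq := hT'.level_parent p.1.2
  simp only [Pi.neg_apply] at hlp hlq
  rw [← hp2] at hlp
  rw [← hq2] at hlq
  have ho := o.2
  have hp1 := p.2
  have hq1 := q.2
  have hxy : hT.parent^[k] o.1.1 = hT.parent^[k + k] p.1.1 := by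
    refine (hT.parent_iterate_eq_of_mem_descendants hp.1 ?_).symm
    rw [hT.level_parent_iterate]
    push_cast
    omega
  obtain ⟨g, i, hik, hg_inj, hg_adj, hg0, hgN, hgN1, hg_lev⟩ :=
    hT.exists_geodesic_ray hxy (adj_iff.mp hpq).1 (by omega)
  obtain ⟨u, hu_adj, hu0, hu_far, hu_lev⟩ := hT'.exists_walk_down_then_up o.1.2 i
  have hlev (n : ℕ) : ℓ (g n) = ℓ' (u n) := by
    have := hu_lev n
    simp only [Pi.neg_apply] at this
    rw [hg_lev]
    omega
  refine ⟨fun n => ⟨(g n, u n), hlev n⟩, 2 * i + k,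
    isRay_mk hlev hg_adj hu_adj (Or.inl hg_inj), Subtype.ext (Prod.ext hg0 hu0),
    Subtype.ext (Prod.ext hgN ((hu_far k).trans hp2.symm)),
    Subtype.ext (Prod.ext hgN1 ?_), fun n => ?_⟩
  · change u (2 * i + (k + 1)) = q.1.2
    rw [hu_far, Function.iterate_succ_apply', hq2, hp2]
  · simp only [Set.mem_Icc, hg_lev, Nat.dist]
    omega

theorem exists_edgeBoundary_box_bottom (o : 𝕍) (k : ℕ) :
    ∃ e ∈ (𝔻).edgeBoundary (box hT hT' (hT.parent^[k] o.1.1) (hT'.parent^[k] o.1.2)),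
      ∀ x ∈ e, ℓ x.1.1 ≤ ℓ o.1.1 - k := by
  have ha := hT.level_parent_iterate k o.1.1
  have hpa := hT.level_parent (hT.parent^[k] o.1.1)
  have hx' := hT'.level_child_iterate k o.1.2
  have hcx' := hT'.level_child (hT'.child^[k] o.1.2)
  have ho := o.2
  simp only [Pi.neg_apply] at hx' hcx'
  let p : 𝕍 := ⟨(hT.parent^[k] o.1.1, hT'.child^[k] o.1.2), by dsimp only; omega⟩
  let q : 𝕍 := ⟨(hT.parent (hT.parent^[k] o.1.1), hT'.child (hT'.child^[k] o.1.2)),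
    by dsimp only; omega⟩
  have hp : p ∈ box hT hT' (hT.parent^[k] o.1.1) (hT'.parent^[k] o.1.2) :=
    ⟨hT.mem_descendants_self _, k + k, by
      rw [Function.iterate_add_apply, hT'.parent_iterate_child_iterate]⟩
  refine ⟨s(p, q), ⟨p, hp, q, fun hq => ?_, adj_iff.mpr ⟨hT.adj_parent _, hT'.adj_child _⟩,
    rfl⟩, ?_⟩
  · have := (level_mem_Icc_of_mem_box hq).1
    dsimp only [q] at this
    omega
  · simp only [Sym2.mem_iff, forall_eq_or_imp, forall_eq, p, q]
    omega

theorem exists_edgeBoundary_box_top (o : 𝕍) (k : ℕ) :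
    ∃ e ∈ (𝔻).edgeBoundary (box hT hT' (hT.parent^[k] o.1.1) (hT'.parent^[k] o.1.2)),
      ∀ x ∈ e, ℓ o.1.1 + k ≤ ℓ x.1.1 := by
  have ha := hT'.level_parent_iterate k o.1.2
  have hpa := hT'.level_parent (hT'.parent^[k] o.1.2)
  have hx := hT.level_child_iterate k o.1.1
  have hcx := hT.level_child (hT.child^[k] o.1.1)
  have ho := o.2
  simp only [Pi.neg_apply] at ha hpa
  let p : 𝕍 := ⟨(hT.child^[k] o.1.1, hT'.parent^[k] o.1.2), by dsimp only; omega⟩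
  let q : 𝕍 := ⟨(hT.child (hT.child^[k] o.1.1), hT'.parent (hT'.parent^[k] o.1.2)),
    by dsimp only; omega⟩
  have hp : p ∈ box hT hT' (hT.parent^[k] o.1.1) (hT'.parent^[k] o.1.2) :=
    ⟨⟨k + k, by rw [Function.iterate_add_apply, hT.parent_iterate_child_iterate]⟩,
      hT'.mem_descendants_self _⟩
  refine ⟨s(p, q), ⟨p, hp, q, fun hq => ?_, adj_iff.mpr ⟨hT.adj_child _, hT'.adj_parent _⟩,
    rfl⟩, ?_⟩
  · have := (level_mem_Icc_of_mem_box hq).2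
    dsimp only [q] at this
    omega
  · simp only [Sym2.mem_iff, forall_eq_or_imp, forall_eq, p, q]
    omega

theorem level_of_mem_edgeBoundary_box_iterate {o : 𝕍} {k : ℕ} {e : Sym2 𝕍}
    (he : e ∈ (𝔻).edgeBoundary (box hT hT' (hT.parent^[k] o.1.1) (hT'.parent^[k] o.1.2))) :
    ∃ p q : 𝕍, e = s(p, q) ∧ ((ℓ p.1.1 = ℓ o.1.1 - k ∧ ℓ q.1.1 = ℓ o.1.1 - k - 1) ∨
      (ℓ p.1.1 = ℓ o.1.1 + k ∧ ℓ q.1.1 = ℓ o.1.1 + k + 1)) := by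
  have ha' := hT'.level_parent_iterate k o.1.2
  have ho := o.2
  simp only [Pi.neg_apply] at ha'
  obtain ⟨p, q, rfl, h⟩ := level_of_mem_edgeBoundary_box he
  rw [hT.level_parent_iterate] at h
  exact ⟨p, q, rfl, by omega⟩

/-- A boundary edge joins a vertex with level in `[ℓ o - k, ℓ o + k]` to one outside, and the rays
through the bottom and top faces stay inside that band exactly up to their crossing edge. -/
theorem existsRayCrossingOnlyAt_of_mem_edgeBoundary_box {o : 𝕍} {k : ℕ} {e : Sym2 𝕍}
    (he : e ∈ (𝔻).edgeBoundary (box hT hT' (hT.parent^[k] o.1.1) (hT'.parent^[k] o.1.2))) :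
    (𝔻).ExistsRayCrossingOnlyAt o
      ((𝔻).edgeBoundary (box hT hT' (hT.parent^[k] o.1.1) (hT'.parent^[k] o.1.2))) e := by
  have hstraddle : ∀ e' ∈ (𝔻).edgeBoundary
      (box hT hT' (hT.parent^[k] o.1.1) (hT'.parent^[k] o.1.2)), ∃ p q : 𝕍, e' = s(p, q) ∧
        ℓ p.1.1 ∈ Set.Icc (ℓ o.1.1 - k) (ℓ o.1.1 + k) ∧
        ℓ q.1.1 ∉ Set.Icc (ℓ o.1.1 - k) (ℓ o.1.1 + k) := fun e' he' => by
    obtain ⟨p, q, rfl, h⟩ := level_of_mem_edgeBoundary_box_iterate he'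
    refine ⟨p, q, rfl, ?_⟩
    simp only [Set.mem_Icc]
    omega
  obtain ⟨p, hp, q, hq, hpq, rfl⟩ := he
  obtain ⟨f, N, hf, hf0, hfN, hfN1, hband⟩ : ∃ (f : ℕ → 𝕍) (N : ℕ), IsRay 𝔻 f ∧ f 0 = o ∧
      f N = p ∧ f (N + 1) = q ∧
      ∀ n, (ℓ (f n).1.1 ∈ Set.Icc (ℓ o.1.1 - k) (ℓ o.1.1 + k) ↔ n ≤ N) := by
    rcases exit_box hp hq hpq with ⟨h1, h2⟩ | ⟨h1, h2⟩
    · exact exists_ray_through_bottom o k hpq hp h1 (by rw [h1, h2])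
    · exact exists_ray_through_top o k hpq hp h1 (by rw [h1, h2])
  exact ⟨f, N, hf, hf0, by rw [hfN, hfN1], fun n hn => eq_of_mem_of_straddles hstraddle hband hn⟩

variable (hT hT') in
theorem exists_minimal_cutset_with_distant_parts (o : 𝕍) {k : ℕ} (hk : 1 ≤ k) :
    ∃ C : Set (Sym2 𝕍), C.Finite ∧ C ⊆ (𝔻).edgeSet ∧ SepInf 𝔻 o C ∧
      (∀ Q ⊂ C, ¬ SepInf 𝔻 o Q) ∧
      ∃ A B : Set (Sym2 𝕍), A ∪ B = C ∧ Disjoint A B ∧ A.Nonempty ∧ B.Nonempty ∧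
        ∀ e₁ ∈ A, ∀ e₂ ∈ B, ∀ x₁ ∈ e₁, ∀ x₂ ∈ e₂, k ≤ (𝔻).dist x₁ x₂ := by
  set F := box hT hT' (hT.parent^[k] o.1.1) (hT'.parent^[k] o.1.2)
  set C := (𝔻).edgeBoundary F
  have hcross (e : Sym2 𝕍) (he : e ∈ C) : (𝔻).ExistsRayCrossingOnlyAt o C e :=
    existsRayCrossingOnlyAt_of_mem_edgeBoundary_box he
  refine ⟨C, finite_edgeBoundary (finite_box _ _) fun p _ => finite_neighborSet hT hT' p,
    edgeBoundary_subset_edgeSet F, sepInf_edgeBoundary (finite_box _ _) ⟨⟨k, rfl⟩, k, rfl⟩,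
    fun Q hQ => not_sepInf_of_ssubset hcross hQ,
    {e ∈ C | ∀ x ∈ e, ℓ x.1.1 ≤ ℓ o.1.1 - k}, {e ∈ C | ∀ x ∈ e, ℓ o.1.1 + k ≤ ℓ x.1.1},
    ?_, ?_, exists_edgeBoundary_box_bottom o k, exists_edgeBoundary_box_top o k, ?_⟩
  · rw [← Set.sep_or]
    refine Set.sep_eq_self_iff_mem_true.mpr fun e he => ?_
    obtain ⟨p, q, rfl, h⟩ := level_of_mem_edgeBoundary_box_iterate he
    simp only [Sym2.mem_iff, forall_eq_or_imp, forall_eq]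
    omega
  · refine Set.disjoint_left.mpr fun e h₁ h₂ => ?_
    obtain ⟨p, q, rfl, -⟩ := level_of_mem_edgeBoundary_box_iterate h₁.1
    have := h₁.2 p (Sym2.mem_mk_left p q)
    have := h₂.2 p (Sym2.mem_mk_left p q)
    omega
  · intro e₁ he₁ e₂ he₂ x₁ hx₁ x₂ hx₂
    have hdist := abs_sub_le_dist (φ := fun x : 𝕍 => ℓ x.1.1)
      (fun _ _ => abs_level_sub_le_one hT)
      (((hcross e₁ he₁.1).reachable hx₁).symm.trans ((hcross e₂ he₂.1).reachable hx₂))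
    have := he₁.2 x₁ hx₁
    have := he₂.2 x₂ hx₂
    rw [abs_le] at hdist
    omega

end DLGraph

theorem stmt8_general {V V' : Type*} (T : SimpleGraph V) (T' : SimpleGraph V')
    (ℓ : V → ℤ) (ℓ' : V' → ℤ)
    (hlev : ∀ u v : V, T.Adj u v → ℓ v = ℓ u + 1 ∨ ℓ v = ℓ u - 1)
    (hlev' : ∀ u v : V', T'.Adj u v → ℓ' v = ℓ' u + 1 ∨ ℓ' v = ℓ' u - 1)
    (hdown : ∀ v : V, {w : V | T.Adj v w ∧ ℓ w = ℓ v + 1}.ncard = 2)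
    (hup : ∀ v : V, {w : V | T.Adj v w ∧ ℓ w = ℓ v - 1}.ncard = 1)
    (hdown' : ∀ v : V', {w : V' | T'.Adj v w ∧ ℓ' w = ℓ' v - 1}.ncard = 2)
    (hup' : ∀ v : V', {w : V' | T'.Adj v w ∧ ℓ' w = ℓ' v + 1}.ncard = 1)
    (o : {p : V × V' // ℓ p.1 = ℓ' p.2}) :
    ∀ k : ℕ, 1 ≤ k →
      ∃ C : Set (Sym2 {p : V × V' // ℓ p.1 = ℓ' p.2}),
        C.Finite ∧ C ⊆ (DLGraph T T' ℓ ℓ').edgeSet ∧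
        SepInf (DLGraph T T' ℓ ℓ') o C ∧
        (∀ Q ⊂ C, ¬ SepInf (DLGraph T T' ℓ ℓ') o Q) ∧
        ∃ A B : Set (Sym2 {p : V × V' // ℓ p.1 = ℓ' p.2}),
          A ∪ B = C ∧ Disjoint A B ∧ A.Nonempty ∧ B.Nonempty ∧
          ∀ e₁ ∈ A, ∀ e₂ ∈ B, ∀ x₁ ∈ e₁, ∀ x₂ ∈ e₂,
            k ≤ (DLGraph T T' ℓ ℓ').dist x₁ x₂ := by
  have hT : IsHorocyclic T ℓ := .of_ncard two_ne_zero hlev hup hdown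
  have hneg (a b : ℤ) : (-a = -b - 1 ↔ a = b + 1) ∧ (-a = -b + 1 ↔ a = b - 1) := by omega
  have hT' : IsHorocyclic T' (-ℓ') := .of_ncard two_ne_zero
    (fun u v huv => by have := hlev' u v huv; simp only [Pi.neg_apply]; omega)
    (fun v => by simpa only [Pi.neg_apply, hneg] using hup' v)
    (fun v => by simpa only [Pi.neg_apply, hneg] using hdown' v)
  intro k hk
  exact DLGraph.exists_minimal_cutset_with_distant_parts hT hT' o hk

/-- in `DL(2,2)` (the horocyclic product of two 3-regular trees with
opposite level orientations), for every `k ≥ 1` there is a finite minimal edge cutset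
`C_k` separating a fixed vertex `o` from infinity which splits into two nonempty parts
`A_k`, `B_k` at distance at least `k`; hence `C_{DL(2,2)} = ∞`. -/
theorem stmt8 {V V' : Type*} (T : SimpleGraph V) (T' : SimpleGraph V')
    (ℓ : V → ℤ) (ℓ' : V' → ℤ)
    (hT : T.Connected) (hTac : T.IsAcyclic)
    (hT' : T'.Connected) (hT'ac : T'.IsAcyclic)
    (hlev : ∀ u v : V, T.Adj u v → ℓ v = ℓ u + 1 ∨ ℓ v = ℓ u - 1)
    (hlev' : ∀ u v : V', T'.Adj u v → ℓ' v = ℓ' u + 1 ∨ ℓ' v = ℓ' u - 1)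
    (hdown : ∀ v : V, {w : V | T.Adj v w ∧ ℓ w = ℓ v + 1}.ncard = 2)
    (hup : ∀ v : V, {w : V | T.Adj v w ∧ ℓ w = ℓ v - 1}.ncard = 1)
    (hdown' : ∀ v : V', {w : V' | T'.Adj v w ∧ ℓ' w = ℓ' v - 1}.ncard = 2)
    (hup' : ∀ v : V', {w : V' | T'.Adj v w ∧ ℓ' w = ℓ' v + 1}.ncard = 1)
    (o : {p : V × V' // ℓ p.1 = ℓ' p.2}) :
    ∀ k : ℕ, 1 ≤ k →
      ∃ C : Set (Sym2 {p : V × V' // ℓ p.1 = ℓ' p.2}),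
        C.Finite ∧ C ⊆ (DLGraph T T' ℓ ℓ').edgeSet ∧
        SepInf (DLGraph T T' ℓ ℓ') o C ∧
        (∀ Q ⊂ C, ¬ SepInf (DLGraph T T' ℓ ℓ') o Q) ∧
        ∃ A B : Set (Sym2 {p : V × V' // ℓ p.1 = ℓ' p.2}),
          A ∪ B = C ∧ Disjoint A B ∧ A.Nonempty ∧ B.Nonempty ∧
          ∀ e₁ ∈ A, ∀ e₂ ∈ B, ∀ x₁ ∈ e₁, ∀ x₂ ∈ e₂,
            k ≤ (DLGraph T T' ℓ ℓ').dist x₁ x₂ :=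
  stmt8_general T T' ℓ ℓ' hlev hlev' hdown hup hdown' hup' o
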